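/- Up to isometry, the positive definite even lattices of rank 2 and determinant 75 are exactly the three lattices with Gram matrices [[2,1],[1,38]], [[6,3],[3,14]] and [[10,5],[5,10]]. -/

import Mathlib

/-!
Gauss reduction: a shear `b ↦ b + n a` makes `|2b| ≤ a`, and if then `c < a` swapping the
two basis vectors strictly decreases `a`, so every positive definite binary form is congruent
to one with `0 ≤ 2b ≤ a ≤ c`. For such a form `a² ≤ ac = 75 + b² ≤ 75 + a²/4` forces `a ≤ 10`,
and a finite search over even `a, c` leaves the three listed forms. They are pairwise
inequivalent because the first diagonal entry of a reduced form is the least nonzero value it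
represents.
-/

/-- `G` is a symmetric, positive definite, even matrix of determinant `d`
(the Gram matrix of a positive definite even rank-2 lattice of determinant `d`). -/
def IsEvenPosDefOfDet (d : ℤ) (G : Matrix (Fin 2) (Fin 2) ℤ) : Prop :=
  G.IsSymm ∧ (∀ v : Fin 2 → ℤ, v ≠ 0 → 0 < dotProduct v (G.mulVec v)) ∧
    (∀ i, Even (G i i)) ∧ G.det = d

/-- Two Gram matrices give isometric lattices iff they are `ℤ`-congruent. -/
def MatCongruent (G H : Matrix (Fin 2) (Fin 2) ℤ) : Prop :=
  ∃ P : Matrix (Fin 2) (Fin 2) ℤ, IsUnit P.det ∧ P.transpose * G * P = H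

open Matrix

theorem Matrix.IsSymm.eq_of_fin_two {R : Type*} {G : Matrix (Fin 2) (Fin 2) R} (h : G.IsSymm) :
    G = !![G 0 0, G 0 1; G 0 1, G 1 1] := by
  have h10 := h.apply 0 1
  ext i j; fin_cases i <;> fin_cases j <;> simp [h10]

namespace MatCongruent

variable {G H K : Matrix (Fin 2) (Fin 2) ℤ}

theorem trans (h₁ : MatCongruent G H) (h₂ : MatCongruent H K) : MatCongruent G K := by
  obtain ⟨P, hP, rfl⟩ := h₁
  obtain ⟨Q, hQ, rfl⟩ := h₂
  refine ⟨P * Q, by simpa only [det_mul] using hP.mul hQ, ?_⟩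
  simp only [transpose_mul, Matrix.mul_assoc]

theorem symm (h : MatCongruent G H) : MatCongruent H G := by
  obtain ⟨P, hP, rfl⟩ := h
  refine ⟨P⁻¹, P.isUnit_nonsing_inv_det hP, ?_⟩
  calc P⁻¹ᵀ * (Pᵀ * G * P) * P⁻¹ = (P * P⁻¹)ᵀ * G * (P * P⁻¹) := by
        simp only [transpose_mul, Matrix.mul_assoc]
    _ = G := by simp [P.mul_nonsing_inv hP]

theorem det_eq (h : MatCongruent G H) : H.det = G.det := by
  obtain ⟨P, hP, rfl⟩ := h
  rw [det_mul, det_mul, det_transpose, mul_comm, ← mul_assoc, ← sq, Int.isUnit_sq hP, one_mul]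

theorem exists_diag_eq_dotProduct_mulVec (h : MatCongruent G H) (i : Fin 2) :
    ∃ v : Fin 2 → ℤ, H i i = v ⬝ᵥ G *ᵥ v := by
  obtain ⟨P, -, rfl⟩ := h
  exact ⟨fun j ↦ P j i, by
    simp only [mul_apply, transpose_apply, Fin.sum_univ_two, dotProduct, mulVec]
    ring⟩

end MatCongruent

section BinaryForm

variable (a b c : ℤ)

theorem dotProduct_mulVec_fin_two (v : Fin 2 → ℤ) :
    v ⬝ᵥ !![a, b; b, c] *ᵥ v = a * v 0 ^ 2 + 2 * b * v 0 * v 1 + c * v 1 ^ 2 := by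
  simp only [dotProduct, mulVec, of_apply, cons_val', cons_val_fin_one, Fin.sum_univ_two,
    cons_val_zero, cons_val_one]
  ring

theorem matCongruent_shear (n : ℤ) :
    MatCongruent !![a, b; b, c] !![a, b + n * a; b + n * a, a * n ^ 2 + 2 * b * n + c] :=
  ⟨!![1, n; 0, 1], by simp [det_fin_two_of], by
    ext i j; fin_cases i <;> fin_cases j <;> simp [mul_apply, Fin.sum_univ_two]
      <;> ring⟩

theorem matCongruent_swap : MatCongruent !![a, b; b, c] !![c, b; b, a] :=
  ⟨!![0, 1; 1, 0], by simp [det_fin_two_of], by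
    ext i j; fin_cases i <;> fin_cases j <;> simp [mul_apply, Fin.sum_univ_two]⟩

theorem matCongruent_neg_off_diag : MatCongruent !![a, b; b, c] !![a, -b; -b, c] :=
  ⟨!![1, 0; 0, -1], by simp [det_fin_two_of], by
    ext i j; fin_cases i <;> fin_cases j <;> simp [mul_apply, Fin.sum_univ_two]⟩

end BinaryForm

theorem dotProduct_mulVec_fin_two_pos_iff {a b c : ℤ} :
    (∀ v : Fin 2 → ℤ, v ≠ 0 → 0 < v ⬝ᵥ !![a, b; b, c] *ᵥ v) ↔
      0 < a ∧ 0 < a * c - b * b := by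
  simp only [dotProduct_mulVec_fin_two]
  constructor
  · intro h
    have ha : 0 < a := by simpa using h ![1, 0] (by simp)
    have hab : 0 < a * (a * c - b * b) := by
      have := h ![b, -a] (by simp [funext_iff, Fin.forall_fin_two, ha.ne'])
      simp only [Matrix.cons_val_zero, Matrix.cons_val_one] at this
      nlinarith
    exact ⟨ha, pos_of_mul_pos_right hab ha.le⟩
  · rintro ⟨ha, hd⟩ v hv
    have hsquare : a * (a * v 0 ^ 2 + 2 * b * v 0 * v 1 + c * v 1 ^ 2) =
        (a * v 0 + b * v 1) ^ 2 + (a * c - b * b) * v 1 ^ 2 := by ring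
    rcases eq_or_ne (v 1) 0 with h1 | h1
    · have h0 : v 0 ≠ 0 := fun h0 ↦ hv (funext (Fin.forall_fin_two.2 ⟨h0, h1⟩))
      rw [h1]; nlinarith [sq_pos_of_ne_zero h0]
    · nlinarith [sq_pos_of_ne_zero h1, sq_nonneg (a * v 0 + b * v 1)]

theorem even_dotProduct_mulVec_fin_two {a b c : ℤ} (ha : Even a) (hc : Even c)
    (v : Fin 2 → ℤ) :
    Even (v ⬝ᵥ !![a, b; b, c] *ᵥ v) := by
  rw [dotProduct_mulVec_fin_two]
  obtain ⟨k, rfl⟩ := ha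
  obtain ⟨l, rfl⟩ := hc
  exact ⟨k * v 0 ^ 2 + b * v 0 * v 1 + l * v 1 ^ 2, by ring⟩

theorem isEvenPosDefOfDet_fin_two_iff {d a b c : ℤ} :
    IsEvenPosDefOfDet d !![a, b; b, c] ↔
      0 < a ∧ 0 < a * c - b * b ∧ Even a ∧ Even c ∧ a * c - b * b = d := by
  have hsymm : (!![a, b; b, c]).IsSymm := by
    ext i j; fin_cases i <;> fin_cases j <;> rfl
  simp only [IsEvenPosDefOfDet, dotProduct_mulVec_fin_two_pos_iff, Fin.forall_fin_two,
    det_fin_two_of]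
  simp [hsymm, and_assoc]

theorem Int.one_le_sq_sub_abs_mul_add_sq {x y : ℤ} (h : x ≠ 0 ∨ y ≠ 0) :
    1 ≤ x ^ 2 - |x * y| + y ^ 2 := by
  rw [abs_mul, ← sq_abs x, ← sq_abs y]
  have hxy : 0 < |x| ∨ 0 < |y| := by simpa only [abs_pos] using h
  rcases lt_trichotomy |x| |y| with hlt | heq | hgt
  · nlinarith [abs_nonneg x]
  · rw [heq] at hxy ⊢; nlinarith [hxy.elim id id]
  · nlinarith [abs_nonneg y]

/-- Reduced in Gauss's sense, with the sign of `b` normalised using an improper congruence. -/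
def IsReducedForm (a b c : ℤ) : Prop := 0 ≤ b ∧ 2 * b ≤ a ∧ a ≤ c

theorem IsReducedForm.le_dotProduct_mulVec {a b c : ℤ} (h : IsReducedForm a b c)
    {v : Fin 2 → ℤ} (hv : v ≠ 0) : a ≤ v ⬝ᵥ !![a, b; b, c] *ᵥ v := by
  obtain ⟨hb, hba, hac⟩ := h
  have hxy : v 0 ≠ 0 ∨ v 1 ≠ 0 := by
    by_contra! h0
    exact hv (funext (Fin.forall_fin_two.2 h0))
  have h1 := Int.one_le_sq_sub_abs_mul_add_sq hxy
  have h2 : -|v 0 * v 1| ≤ v 0 * v 1 := neg_abs_le _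
  rw [dotProduct_mulVec_fin_two]
  nlinarith [sq_nonneg (v 1), abs_nonneg (v 0 * v 1), mul_le_mul_of_nonneg_left h2 hb]

theorem IsReducedForm.not_matCongruent_of_lt {a b c a' b' c' : ℤ}
    (h' : IsReducedForm a' b' c') (ha : 0 < a) (hlt : a < a') :
    ¬ MatCongruent !![a, b; b, c] !![a', b'; b', c'] := by
  intro h
  obtain ⟨v, hv⟩ := h.symm.exists_diag_eq_dotProduct_mulVec 0
  simp only [of_apply, cons_val', cons_val_zero, empty_val', cons_val_fin_one] at hv
  rcases eq_or_ne v 0 with rfl | hv0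
  · simp only [mulVec_zero, dotProduct_zero] at hv
    omega
  · linarith [h'.le_dotProduct_mulVec hv0]

theorem exists_abs_two_mul_add_mul_le (a b : ℤ) (ha : 0 < a) :
    ∃ n : ℤ, |2 * (b + n * a)| ≤ a := by
  refine ⟨-((2 * b + a) / (2 * a)), abs_le.2 ⟨?_, ?_⟩⟩ <;>
  · have h1 := Int.mul_ediv_add_emod (2 * b + a) (2 * a)
    have h2 := Int.emod_nonneg (2 * b + a) (by omega : 2 * a ≠ 0)
    have h3 := Int.emod_lt_of_pos (2 * b + a) (by omega : 0 < 2 * a)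
    linarith

theorem exists_matCongruent_isReducedForm (a b c : ℤ) (ha : 0 < a)
    (hd : 0 < a * c - b * b) :
    ∃ a' b' c', MatCongruent !![a, b; b, c] !![a', b'; b', c'] ∧ IsReducedForm a' b' c' := by
  obtain ⟨n, hn⟩ := exists_abs_two_mul_add_mul_le a b ha
  have hshear := matCongruent_shear a b c n
  set b' := b + n * a
  set c' := a * n ^ 2 + 2 * b * n + c
  have hd' : a * c' - b' * b' = a * c - b * b := by ring
  rw [abs_le] at hn
  by_cases hc' : c' < a
  · have hc'_pos : 0 < c' := by nlinarith
    obtain ⟨a'', b'', c'', h, hred⟩ :=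
      exists_matCongruent_isReducedForm c' b' a hc'_pos (by linarith)
    exact ⟨a'', b'', c'', hshear.trans ((matCongruent_swap a b' c').trans h), hred⟩
  · rcases le_or_gt 0 b' with hb' | hb'
    · exact ⟨a, b', c', hshear, hb', by omega, by omega⟩
    · exact ⟨a, -b', c', hshear.trans (matCongruent_neg_off_diag a b' c'),
        by omega, by omega, by omega⟩
termination_by a.toNat
decreasing_by omega

theorem IsReducedForm.eq_of_even_of_det_eq_75 {a b c : ℤ} (h : IsReducedForm a b c)
    (ha : Even a) (hc : Even c) (hdet : a * c - b * b = 75) :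
    (a = 2 ∧ b = 1 ∧ c = 38) ∨ (a = 6 ∧ b = 3 ∧ c = 14) ∨
      (a = 10 ∧ b = 5 ∧ c = 10) := by
  obtain ⟨hb, hba, hac⟩ := h
  have ha10 : a ≤ 10 := by nlinarith
  obtain ⟨k, rfl⟩ := ha
  obtain ⟨l, rfl⟩ := hc
  have hk : 0 < k := by nlinarith
  have hk5 : k ≤ 5 := by omega
  have hb5 : b ≤ 5 := by omega
  interval_cases k <;> interval_cases b <;> omega

/-- Up to isometry, the positive definite even lattices of rank 2 and determinant 75 are
exactly the three lattices with Gram matrices `[[2,1],[1,38]]`, `[[6,3],[3,14]]` and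
`[[10,5],[5,10]]`. -/
theorem stmt_15 :
    IsEvenPosDefOfDet 75 !![2, 1; 1, 38] ∧ IsEvenPosDefOfDet 75 !![6, 3; 3, 14] ∧
    IsEvenPosDefOfDet 75 !![10, 5; 5, 10] ∧
    (∀ G : Matrix (Fin 2) (Fin 2) ℤ, IsEvenPosDefOfDet 75 G →
      MatCongruent G !![2, 1; 1, 38] ∨ MatCongruent G !![6, 3; 3, 14] ∨
        MatCongruent G !![10, 5; 5, 10]) ∧
    ¬ MatCongruent !![2, 1; 1, 38] !![6, 3; 3, 14] ∧
    ¬ MatCongruent !![2, 1; 1, 38] !![10, 5; 5, 10] ∧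
    ¬ MatCongruent !![6, 3; 3, 14] !![10, 5; 5, 10] := by
  have hred₁ : IsReducedForm 6 3 14 := by norm_num [IsReducedForm]
  have hred₂ : IsReducedForm 10 5 10 := by norm_num [IsReducedForm]
  refine ⟨isEvenPosDefOfDet_fin_two_iff.2 (by decide),
    isEvenPosDefOfDet_fin_two_iff.2 (by decide), isEvenPosDefOfDet_fin_two_iff.2 (by decide),
    fun G hG ↦ ?_,
    hred₁.not_matCongruent_of_lt (by norm_num) (by norm_num),
    hred₂.not_matCongruent_of_lt (by norm_num) (by norm_num),
    hred₂.not_matCongruent_of_lt (by norm_num) (by norm_num)⟩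
  have hGeq := hG.1.eq_of_fin_two
  rw [hGeq] at hG ⊢
  obtain ⟨ha, hd, hea, hec, -⟩ := isEvenPosDefOfDet_fin_two_iff.1 hG
  obtain ⟨a, b, c, hcongr, hred⟩ := exists_matCongruent_isReducedForm _ _ _ ha hd
  have hdet : a * c - b * b = 75 := by
    rw [← det_fin_two_of, hcongr.det_eq]; exact hG.2.2.2
  have heven (i : Fin 2) : Even (!![a, b; b, c] i i) := by
    obtain ⟨v, hv⟩ := hcongr.exists_diag_eq_dotProduct_mulVec i
    exact hv ▸ even_dotProduct_mulVec_fin_two hea hec v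
  rcases hred.eq_of_even_of_det_eq_75 (heven 0) (heven 1) hdet with
    ⟨rfl, rfl, rfl⟩ | ⟨rfl, rfl, rfl⟩ | ⟨rfl, rfl, rfl⟩
  exacts [Or.inl hcongr, Or.inr (Or.inl hcongr), Or.inr (Or.inr hcongr)]
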